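/- The polynomial \(2u^5vw + 4u^3v^3w + u^2v^4w + u^6 + 2u^5v + 3u^4vw + 2u^3v^2w + 4u^2v^3w + 4u^2v^2w^2 + 2uv^5 + 2uv^4w + 3uv^3w^2 + 4v^6 + 2v^5w + 4v^4w^2 + u^4v + 3u^3v^2 + 4u^3vw + 4u^2v^3 + 2uv^4 + 3uv^3w + 3uv^2w^2 + v^5 + 2v^4w + 3v^3w^2 + 2u^2v^2 + 3uv^3 + uv^2w + 3v^4 + 3v^3w + 4v^2w^2 + 3v^3\) over \(\mathbb{F}_5\) is irreducible, and has degree 6 in \(u\), degree 6 in \(v\), and degree 2 in \(w\). -/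

import Mathlib

/-!
Viewed as a polynomial in `u` over `𝔽₅[v, w]` (via `finSuccEquiv`), `L5mod5` is monic of
degree 6, so a nontrivial factorization can be taken with monic factors, one of degree 1, 2 or 3,
and these degrees survive every specialization of `(v, w)`. Over `𝔽₅` the specialization at
`(v, w) = (1, 0)` has no root and no cubic factor, and the one at `(1, 2)` has no quadratic
factor (a quadratic or cubic factor is excluded by a finite search over the coefficient equations
of the factorization). The degrees in `v` and `w` are computed by first swapping that variable
with `u`.
-/

open MvPolynomial

/-- The reduction mod 5 of the equation of the function field of `𝓛₅` in
coordinates `(u, v, w) = (X 0, X 1, X 2)`. -/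
noncomputable def L5mod5 : MvPolynomial (Fin 3) (ZMod 5) :=
  let u : MvPolynomial (Fin 3) (ZMod 5) := X 0
  let v : MvPolynomial (Fin 3) (ZMod 5) := X 1
  let w : MvPolynomial (Fin 3) (ZMod 5) := X 2
  2*u^5*v*w + 4*u^3*v^3*w + u^2*v^4*w + u^6 + 2*u^5*v + 3*u^4*v*w + 2*u^3*v^2*w
    + 4*u^2*v^3*w + 4*u^2*v^2*w^2 + 2*u*v^5 + 2*u*v^4*w + 3*u*v^3*w^2 + 4*v^6
    + 2*v^5*w + 4*v^4*w^2 + u^4*v + 3*u^3*v^2 + 4*u^3*v*w + 4*u^2*v^3 + 2*u*v^4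
    + 3*u*v^3*w + 3*u*v^2*w^2 + v^5 + 2*v^4*w + 3*v^3*w^2 + 2*u^2*v^2 + 3*u*v^3
    + u*v^2*w + 3*v^4 + 3*v^3*w + 4*v^2*w^2 + 3*v^3

open scoped Polynomial

namespace Polynomial

theorem Monic.monic_natDegree_of_eq_mul {R : Type*} [Semiring R] {f g h : R[X]} (hf : f.Monic)
    (hg : g.Monic) (hgh : f = g * h) :
    h.Monic ∧ h.natDegree = f.natDegree - g.natDegree := by
  have hh : h.Monic := hg.of_mul_monic_left (hgh ▸ hf)
  exact ⟨hh, by rw [hgh, hg.natDegree_mul hh, Nat.add_sub_cancel_left]⟩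

/-- Monic factors keep their degree under any map to a nontrivial ring, so a monic factor of
degree `k` can be ruled out after a suitable specialization. -/
theorem Monic.irreducible_of_forall_exists_map {R S : Type*} [CommSemiring R] [NoZeroDivisors R]
    [Semiring S] [Nontrivial S] {f : R[X]} (hf : f.Monic) (hf1 : f ≠ 1)
    (h : ∀ k ∈ Finset.Ioc 0 (f.natDegree / 2), ∃ φ : R →+* S,
      ∀ g : S[X], g.Monic → g ∣ f.map φ → g.natDegree ≠ k) :
    Irreducible f := by
  refine (hf.irreducible_iff_lt_natDegree_lt hf1).mpr fun q hq hdeg hqf => ?_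
  obtain ⟨φ, hφ⟩ := h _ hdeg
  exact hφ _ (hq.map φ) (Polynomial.map_dvd φ hqf) (hq.natDegree_map φ)

end Polynomial

theorem MvPolynomial.degreeOf_eq_natDegree_finSuccEquiv_rename_swap {R : Type*} [CommSemiring R]
    {n : ℕ} (p : MvPolynomial (Fin (n + 1)) R) (i : Fin (n + 1)) :
    p.degreeOf i = (finSuccEquiv R n (rename (Equiv.swap 0 i) p)).natDegree := by
  have := degreeOf_rename_of_injective (p := p) (Equiv.swap 0 i).injective i
  rw [Equiv.swap_apply_right] at this
  rw [natDegree_finSuccEquiv, this]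

theorem MvPolynomial.finSuccEquiv_X_one {R : Type*} [CommSemiring R] {n : ℕ} :
    finSuccEquiv R (n + 1) (X 1) = Polynomial.C (X 0) := by
  rw [← Fin.succ_zero_eq_one, finSuccEquiv_X_succ]

theorem MvPolynomial.finSuccEquiv_X_two {R : Type*} [CommSemiring R] {n : ℕ} :
    finSuccEquiv R (n + 2) (X 2) = Polynomial.C (X 1) := by
  rw [← Fin.succ_one_eq_two, finSuccEquiv_X_succ]

instance : Fact (Nat.Prime 5) := ⟨Nat.prime_five⟩

namespace L5mod5

noncomputable def atOneZero : (ZMod 5)[X] :=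
  Polynomial.X ^ 6 + 2 * Polynomial.X ^ 5 + Polynomial.X ^ 4 + 3 * Polynomial.X ^ 3 +
    Polynomial.X ^ 2 + 2 * Polynomial.X + 1

noncomputable def atOneTwo : (ZMod 5)[X] :=
  Polynomial.X ^ 6 + Polynomial.X ^ 5 + 2 * Polynomial.X ^ 4 + 3 * Polynomial.X ^ 3 +
    2 * Polynomial.X ^ 2 + 3 * Polynomial.X + 4

theorem monic_finSuccEquiv : (finSuccEquiv (ZMod 5) 2 L5mod5).Monic := by
  simp only [L5mod5, map_add, map_mul, map_pow, map_ofNat, finSuccEquiv_X_zero,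
    finSuccEquiv_X_one, finSuccEquiv_X_two]
  monicity!

theorem natDegree_finSuccEquiv : (finSuccEquiv (ZMod 5) 2 L5mod5).natDegree = 6 := by
  simp only [L5mod5, map_add, map_mul, map_pow, map_ofNat, finSuccEquiv_X_zero,
    finSuccEquiv_X_one, finSuccEquiv_X_two]
  compute_degree!

theorem degreeOf_u : degreeOf 0 L5mod5 = 6 := by
  rw [← MvPolynomial.natDegree_finSuccEquiv, L5mod5.natDegree_finSuccEquiv]

theorem degreeOf_v : degreeOf 1 L5mod5 = 6 := by
  rw [degreeOf_eq_natDegree_finSuccEquiv_rename_swap]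
  simp only [L5mod5, map_add, map_mul, map_pow, map_ofNat, rename_X, Equiv.swap_apply_def,
    Fin.reduceEq, if_true, if_false, finSuccEquiv_X_zero, finSuccEquiv_X_one, finSuccEquiv_X_two]
  compute_degree!
  exact ne_of_apply_ne (eval ![1, 0]) (by simp only [eval_ofNat, map_zero]; decide)

theorem degreeOf_w : degreeOf 2 L5mod5 = 2 := by
  rw [degreeOf_eq_natDegree_finSuccEquiv_rename_swap]
  simp only [L5mod5, map_add, map_mul, map_pow, map_ofNat, rename_X, Equiv.swap_apply_def,
    Fin.reduceEq, if_true, if_false, finSuccEquiv_X_zero, finSuccEquiv_X_one, finSuccEquiv_X_two]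
  compute_degree!
  exact ne_of_apply_ne (eval ![1, 0]) (by
    simp only [map_add, map_mul, map_pow, eval_ofNat, eval_X, Matrix.cons_val_zero,
      Matrix.cons_val_one, Matrix.cons_val_fin_one, map_zero]
    decide)

theorem map_finSuccEquiv_eval_one_zero :
    (finSuccEquiv (ZMod 5) 2 L5mod5).map (eval ![1, 0]) = atOneZero := by
  simp only [L5mod5, atOneZero, map_add, map_mul, map_pow, map_ofNat, finSuccEquiv_X_zero,
    finSuccEquiv_X_one, finSuccEquiv_X_two, Polynomial.map_add, Polynomial.map_mul,
    Polynomial.map_pow, Polynomial.map_X, Polynomial.map_C, Polynomial.map_ofNat, eval_X,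
    Matrix.cons_val_zero, Matrix.cons_val_one, Matrix.cons_val_fin_one, map_zero, map_one]
  ring_nf
  reduce_mod_char

theorem map_finSuccEquiv_eval_one_two :
    (finSuccEquiv (ZMod 5) 2 L5mod5).map (eval ![1, 2]) = atOneTwo := by
  simp only [L5mod5, atOneTwo, map_add, map_mul, map_pow, map_ofNat, finSuccEquiv_X_zero,
    finSuccEquiv_X_one, finSuccEquiv_X_two, Polynomial.map_add, Polynomial.map_mul,
    Polynomial.map_pow, Polynomial.map_X, Polynomial.map_C, Polynomial.map_ofNat, eval_X,
    Matrix.cons_val_zero, Matrix.cons_val_one, Matrix.cons_val_fin_one, map_one]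
  ring_nf
  reduce_mod_char

theorem monic_atOneZero : atOneZero.Monic := by
  unfold atOneZero; monicity!

theorem natDegree_atOneZero : atOneZero.natDegree = 6 := by
  unfold atOneZero; compute_degree!

theorem monic_atOneTwo : atOneTwo.Monic := by
  unfold atOneTwo; monicity!

theorem natDegree_atOneTwo : atOneTwo.natDegree = 6 := by
  unfold atOneTwo; compute_degree!

theorem eval_atOneZero_ne_zero (t : ZMod 5) : atOneZero.eval t ≠ 0 := by
  revert t
  simp only [atOneZero, Polynomial.eval_add, Polynomial.eval_mul, Polynomial.eval_pow,
    Polynomial.eval_X, Polynomial.eval_ofNat, Polynomial.eval_one]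
  decide

theorem natDegree_ne_one_of_monic_dvd_atOneZero {g : (ZMod 5)[X]} (hg : g.Monic)
    (hgf : g ∣ atOneZero) : g.natDegree ≠ 1 := by
  intro dg
  rw [hg.eq_X_add_C dg, ← sub_neg_eq_add, ← map_neg, Polynomial.dvd_iff_isRoot] at hgf
  exact eval_atOneZero_ne_zero _ hgf

theorem natDegree_ne_three_of_monic_dvd_atOneZero {g : (ZMod 5)[X]} (hg : g.Monic)
    (hgf : g ∣ atOneZero) : g.natDegree ≠ 3 := by
  intro dg
  obtain ⟨h, hgh⟩ := hgf
  obtain ⟨hh, dh⟩ := monic_atOneZero.monic_natDegree_of_eq_mul hg hgh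
  rw [natDegree_atOneZero, dg] at dh
  -- the coefficients of `X ^ 0, …, X ^ 5` in `g * h`, against those of `atOneZero`
  have no_solution : ∀ a₀ a₁ a₂ b₀ b₁ b₂ : ZMod 5,
      (a₀ * b₀, a₀ * b₁ + a₁ * b₀, a₀ * b₂ + a₁ * b₁ + a₂ * b₀, a₀ + a₁ * b₂ + a₂ * b₁ + b₀,
        a₁ + a₂ * b₂ + b₁, a₂ + b₂) ≠ (1, 2, 1, 3, 1, 2) := by
    decide
  refine no_solution (g.coeff 0) (g.coeff 1) (g.coeff 2) (h.coeff 0) (h.coeff 1) (h.coeff 2) ?_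
  simpa [atOneZero, Polynomial.coeff_mul, Finset.Nat.sum_antidiagonal_eq_sum_range_succ_mk,
    Finset.sum_range_succ, dg ▸ hg.coeff_natDegree, dh ▸ hh.coeff_natDegree,
    Polynomial.coeff_eq_zero_of_natDegree_lt, dg, dh, Polynomial.coeff_X] using
    congrArg (fun p : (ZMod 5)[X] => (p.coeff 0, p.coeff 1, p.coeff 2, p.coeff 3, p.coeff 4,
      p.coeff 5)) hgh.symm

theorem natDegree_ne_two_of_monic_dvd_atOneTwo {g : (ZMod 5)[X]} (hg : g.Monic)
    (hgf : g ∣ atOneTwo) : g.natDegree ≠ 2 := by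
  intro dg
  obtain ⟨h, hgh⟩ := hgf
  obtain ⟨hh, dh⟩ := monic_atOneTwo.monic_natDegree_of_eq_mul hg hgh
  rw [natDegree_atOneTwo, dg] at dh
  have no_solution : ∀ a₀ a₁ b₀ b₁ b₂ b₃ : ZMod 5,
      (a₀ * b₀, a₀ * b₁ + a₁ * b₀, a₀ * b₂ + a₁ * b₁ + b₀, a₀ * b₃ + a₁ * b₂ + b₁,
        a₀ + a₁ * b₃ + b₂, a₁ + b₃) ≠ (4, 3, 2, 3, 2, 1) := by
    decide
  refine no_solution (g.coeff 0) (g.coeff 1) (h.coeff 0) (h.coeff 1) (h.coeff 2) (h.coeff 3) ?_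
  simpa [atOneTwo, Polynomial.coeff_mul, Finset.Nat.sum_antidiagonal_eq_sum_range_succ_mk,
    Finset.sum_range_succ, dg ▸ hg.coeff_natDegree, dh ▸ hh.coeff_natDegree,
    Polynomial.coeff_eq_zero_of_natDegree_lt, dg, dh, Polynomial.coeff_X] using
    congrArg (fun p : (ZMod 5)[X] => (p.coeff 0, p.coeff 1, p.coeff 2, p.coeff 3, p.coeff 4,
      p.coeff 5)) hgh.symm

theorem irreducible_finSuccEquiv : Irreducible (finSuccEquiv (ZMod 5) 2 L5mod5) := by
  refine monic_finSuccEquiv.irreducible_of_forall_exists_map (S := ZMod 5)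
    (fun h1 => by simpa [h1] using L5mod5.natDegree_finSuccEquiv) ?_
  rw [L5mod5.natDegree_finSuccEquiv]
  intro k hk
  obtain rfl | rfl | rfl : k = 1 ∨ k = 2 ∨ k = 3 := by simp at hk; omega
  · exact ⟨eval ![1, 0], fun g hg hgf => natDegree_ne_one_of_monic_dvd_atOneZero hg
      (map_finSuccEquiv_eval_one_zero ▸ hgf)⟩
  · exact ⟨eval ![1, 2], fun g hg hgf => natDegree_ne_two_of_monic_dvd_atOneTwo hg
      (map_finSuccEquiv_eval_one_two ▸ hgf)⟩
  · exact ⟨eval ![1, 0], fun g hg hgf => natDegree_ne_three_of_monic_dvd_atOneZero hg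
      (map_finSuccEquiv_eval_one_zero ▸ hgf)⟩

end L5mod5

/-- the above polynomial over `𝔽₅` is irreducible, of degree 6 in `u`,
degree 6 in `v`, and degree 2 in `w`. -/
theorem L5_mod5_irreducible :
    Irreducible L5mod5 ∧ degreeOf 0 L5mod5 = 6 ∧ degreeOf 1 L5mod5 = 6 ∧
      degreeOf 2 L5mod5 = 2 := by
  refine ⟨?_, L5mod5.degreeOf_u, L5mod5.degreeOf_v, L5mod5.degreeOf_w⟩
  exact (MulEquiv.irreducible_iff (finSuccEquiv (ZMod 5) 2)).mp L5mod5.irreducible_finSuccEquiv
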